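/- For every integer m ≥ 0 and every real number z with z > α^{2m}, where α = (1 + √5)/2, the series ∑_{n=0}^∞ ((−1)^n/(2n+1)) · F_{2m(2n+1)}/z^{2n+1} converges and equals (1/√5) · arctan(√5·F_{2m}·z / (z² + 1)). -/

import Mathlib

open goldenRatio Real

theorem fib_even_arctan_series (m : ℕ) (z : ℝ)
    (hz : z > ((1 + Real.sqrt 5) / 2) ^ (2 * m)) :
    HasSum
      (fun n : ℕ => (-1 : ℝ) ^ n / (2 * (n : ℝ) + 1) *
        ((Nat.fib (2 * m * (2 * n + 1)) : ℝ) / z ^ (2 * n + 1)))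
      (1 / Real.sqrt 5 *
        Real.arctan (Real.sqrt 5 * (Nat.fib (2 * m) : ℝ) * z / (z ^ 2 + 1))) := by
  have hzφ : z > φ ^ (2 * m) := hz
  have hφ1 : (1 : ℝ) ≤ φ ^ (2 * m) := one_le_pow₀ one_lt_goldenRatio.le
  have hψ : ψ ^ (2 * m) = (φ ^ (2 * m))⁻¹ :=
    eq_inv_of_mul_eq_one_right (by rw [← mul_pow, goldenRatio_mul_goldenConj, pow_mul]; norm_num)
  set g : ℝ := φ ^ (2 * m) with hg_def
  have hgpos : (0 : ℝ) < g := lt_of_lt_of_le one_pos hφ1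
  have hz1 : (1 : ℝ) < z := lt_of_le_of_lt hφ1 hzφ
  have hz0 : (0 : ℝ) < z := lt_trans one_pos hz1
  set a : ℝ := g / z with ha_def
  set b : ℝ := g⁻¹ / z with hb_def
  have ha0 : 0 < a := div_pos hgpos hz0
  have hb0 : 0 < b := div_pos (inv_pos.mpr hgpos) hz0
  have ha1 : a < 1 := (div_lt_one hz0).mpr hzφ
  have hb1 : b < 1 := by
    rw [hb_def, div_lt_one hz0]
    calc g⁻¹ ≤ 1 := inv_le_one_of_one_le₀ hφ1
      _ < z := hz1
  have ha : ‖a‖ < 1 := by rw [Real.norm_eq_abs, abs_of_pos ha0]; exact ha1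
  have hb : ‖b‖ < 1 := by rw [Real.norm_eq_abs, abs_of_pos hb0]; exact hb1
  have H1 := Real.hasSum_arctan ha
  have H2 := Real.hasSum_arctan hb
  have H := (H1.sub H2).mul_left (1 / Real.sqrt 5)
  have hs5 : Real.sqrt 5 ≠ 0 := by positivity
  have hfun : (fun n : ℕ => (1 / Real.sqrt 5) *
      ((-1 : ℝ) ^ n * a ^ (2 * n + 1) / ↑(2 * n + 1)
        - (-1 : ℝ) ^ n * b ^ (2 * n + 1) / ↑(2 * n + 1)))
      = (fun n : ℕ => (-1 : ℝ) ^ n / (2 * (n : ℝ) + 1) *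
        ((Nat.fib (2 * m * (2 * n + 1)) : ℝ) / z ^ (2 * n + 1))) := by
    funext n
    have hfib : (Nat.fib (2 * m * (2 * n + 1)) : ℝ)
        = (g ^ (2 * n + 1) - (g⁻¹) ^ (2 * n + 1)) / Real.sqrt 5 := by
      rw [Real.coe_fib_eq, pow_mul φ (2 * m) (2 * n + 1), pow_mul ψ (2 * m) (2 * n + 1), hψ, hg_def]
    have hzp : (z : ℝ) ^ (2 * n + 1) ≠ 0 := pow_ne_zero _ hz0.ne'
    rw [hfib, ha_def, hb_def, div_pow, div_pow]
    push_cast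
    field_simp
  rw [hfun] at H
  convert H using 1
  · rfl
  have hab1 : a * -b < 1 := by nlinarith
  have harc := Real.arctan_add hab1
  rw [Real.arctan_neg] at harc
  have hval : arctan a - arctan b = arctan ((a - b) / (1 + a * b)) := by
    rw [sub_eq_add_neg, harc]; ring_nf
  rw [hval]
  congr 2
  have hfib2 : (Nat.fib (2 * m) : ℝ) = (g - g⁻¹) / Real.sqrt 5 := by
    rw [Real.coe_fib_eq, hψ, hg_def]
  rw [hfib2, ha_def, hb_def]
  have hz2 : z ^ 2 + 1 ≠ 0 := by positivity
  field_simp
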